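/- arXiv:1001.5183 — 6 statements merged into one kernel-verified Lean document; each statement's English description precedes it below -/
import Mathlib

section
/- Let n ≥ 2 and W ≥ 1 be integers, and consider the player-1 energy parity game with states Q = {0,1,…,n−1} (all belonging to player 1), edges (i,i+1) and (i+1,i) for 0 ≤ i ≤ n−2 each of weight −W, a self-loop (n−1,n−1) of weight 1, priority 0 for state 0 and priority 1 for all other states. Then for every play ρ from state 0 and every initial credit c₀ ∈ ℕ, if ρ satisfies both the parity condition and the energy condition with initial credit c₀, then c₀ ≥ (n−1)·W. -/
variable {Q : Type*}

/-- A play: an infinite path in the edge relation `E`. -/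
def IsPlay (E : Q → Q → Prop) (ρ : ℕ → Q) : Prop :=
  ∀ i, E (ρ i) (ρ (i + 1))

/-- Energy level of the prefix of length `n` of `ρ`. -/
def EL (w : Q → Q → ℤ) (ρ : ℕ → Q) (n : ℕ) : ℤ :=
  ∑ i ∈ Finset.range n, w (ρ i) (ρ (i + 1))

/-- Energy condition with initial credit `c₀`. -/
def EnergyCond (w : Q → Q → ℤ) (c₀ : ℕ) (ρ : ℕ → Q) : Prop :=
  ∀ n, 0 ≤ (c₀ : ℤ) + EL w ρ n

/-- The state `q` occurs infinitely often in `ρ`. -/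
def InfOften (ρ : ℕ → Q) (q : Q) : Prop :=
  ∀ N, ∃ n, N ≤ n ∧ ρ n = q

/-- Parity condition: the minimum priority occurring infinitely often is even. -/
def ParityCond (p : Q → ℕ) (ρ : ℕ → Q) : Prop :=
  ∃ q, InfOften ρ q ∧ Even (p q) ∧ ∀ q', InfOften ρ q' → p q ≤ p q'

/-! A play from state `0` moves at most one state per step, so its first `n - 1` steps all
leave a state below `n - 1` and none is the self-loop: they cost `W` each, and the energy
condition at time `n - 1` already forces `(n - 1) * W ≤ c₀`. -/

theorem IsPlay.le_add_of_step_le {E : Q → Q → Prop} {ρ : ℕ → Q} (hρ : IsPlay E ρ)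
    (r : Q → ℕ) (hr : ∀ q q', E q q' → r q' ≤ r q + 1) (k : ℕ) :
    r (ρ k) ≤ r (ρ 0) + k := by
  induction k with
  | zero => simp
  | succ k ih => linarith [hr _ _ (hρ k)]

theorem EL_eq_mul_of_forall_lt {w : Q → Q → ℤ} {ρ : ℕ → Q} {k : ℕ} {a : ℤ}
    (h : ∀ i < k, w (ρ i) (ρ (i + 1)) = a) : EL w ρ k = k * a := by
  rw [EL, Finset.sum_congr rfl fun i hi => h i (Finset.mem_range.mp hi)]
  simp

theorem stmt1_general (n W : ℕ)
    (E : Fin n → Fin n → Prop)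
    (hE : ∀ i j, E i j ↔
      ((i : ℕ) + 1 = (j : ℕ) ∨ (j : ℕ) + 1 = (i : ℕ) ∨
        ((i : ℕ) = n - 1 ∧ (j : ℕ) = n - 1)))
    (w : Fin n → Fin n → ℤ)
    (hw : ∀ i j, w i j = if i = j then 1 else -(W : ℤ))
    (ρ : ℕ → Fin n) (h0 : (ρ 0 : ℕ) = 0) (hplay : IsPlay E ρ)
    (c₀ : ℕ) (hen : EnergyCond w c₀ ρ) :
    (n - 1) * W ≤ c₀ := by
  have hle (i : ℕ) : (ρ i : ℕ) ≤ i := by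
    simpa [h0] using hplay.le_add_of_step_le (fun q => (q : ℕ))
      (fun q q' h => by rw [hE] at h; omega) i
  have hstep : ∀ i < n - 1, w (ρ i) (ρ (i + 1)) = -(W : ℤ) := by
    intro i hi
    have hne : ρ i ≠ ρ (i + 1) := fun heq => by
      have hedge := (hE _ _).mp (hplay i)
      rw [← heq] at hedge
      have := hle i
      omega
    simp [hw, hne]
  have henergy := hen (n - 1)
  rw [EL_eq_mul_of_forall_lt hstep] at henergy
  have : (((n - 1) * W : ℕ) : ℤ) ≤ c₀ := by push_cast; linarith
  exact_mod_cast this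

/-- In the ladder game on `{0,…,n−1}` (edges `(i,i+1)` and `(i+1,i)` of
weight `−W`, self-loop at `n−1` of weight `1`, priority `0` at state `0` and `1`
elsewhere), every play from state `0` satisfying the parity condition and the energy
condition with initial credit `c₀` requires `c₀ ≥ (n−1)·W`. -/
theorem stmt1 (n W : ℕ) (hn : 2 ≤ n) (hW : 1 ≤ W)
    (E : Fin n → Fin n → Prop)
    (hE : ∀ i j, E i j ↔
      ((i : ℕ) + 1 = (j : ℕ) ∨ (j : ℕ) + 1 = (i : ℕ) ∨
        ((i : ℕ) = n - 1 ∧ (j : ℕ) = n - 1)))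
    (w : Fin n → Fin n → ℤ)
    (hw : ∀ i j, w i j = if i = j then 1 else -(W : ℤ))
    (p : Fin n → ℕ)
    (hp : ∀ i, p i = if (i : ℕ) = 0 then 0 else 1)
    (ρ : ℕ → Fin n) (h0 : (ρ 0 : ℕ) = 0) (hplay : IsPlay E ρ)
    (c₀ : ℕ) (hpar : ParityCond p ρ) (hen : EnergyCond w c₀ ρ) :
    (n - 1) * W ≤ c₀ :=
  stmt1_general n W E hE w hw ρ h0 hplay c₀ hen
end

section
/- Let n ≥ 2 and W ≥ 1 be integers, and consider the player-1 energy parity game with states Q = {0,1,…,n−1} (all belonging to player 1), edges (i,i+1) and (i+1,i) for 0 ≤ i ≤ n−2 each of weight −W, a self-loop (n−1,n−1) of weight 1, priority 0 for state 0 and priority 1 for all other states. Then every finite-memory strategy of memory size m that is winning from state 0 for the energy parity objective with some finite initial credit satisfies m ≥ 2·(n−1)·W + 1. -/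
variable {Q : Type*}

/-- Memory state of the transducer after reading `ρ 0, …, ρ (i-1)`. -/
def MemRun {M : Type*} (αu : M → Q → M) (m₀ : M) (ρ : ℕ → Q) : ℕ → M
  | 0 => m₀
  | i + 1 => αu (MemRun αu m₀ ρ i) (ρ i)

/-- An outcome of the finite-memory strategy given by the transducer `⟨M, m₀, αu, αn⟩`. -/
def TransOutcome {M : Type*} (Q1 : Set Q) (E : Q → Q → Prop)
    (αu : M → Q → M) (αn : M → Q → Q) (m₀ : M) (q₀ : Q) (ρ : ℕ → Q) : Prop :=
  ρ 0 = q₀ ∧ IsPlay E ρ ∧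
    ∀ i, ρ i ∈ Q1 → ρ (i + 1) = αn (MemRun αu m₀ ρ i) (ρ i)

/-!
All states belong to player 1, so a transducer strategy has a single outcome: the orbit of
`(m₀, q₀)` under `(m, q) ↦ (αu m q, αn m q)` on the finite set `M × Q`, which is eventually
periodic. On the cycle, parity forces a visit to state `0` and the energy condition forces a
nonnegative cycle weight `ℓ - k W`, where `ℓ` counts self-loops and `k` moves. So `ℓ > 0`, the
cycle climbs from `0` to `n - 1` and back, `k ≥ 2 (n - 1)`, and `ℓ ≥ 2 (n - 1) W`. Within one
minimal period the pairs (memory, state) are distinct, so the `ℓ + 1` visits of `n - 1` (each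
self-loop and the final descent) carry distinct memory states.
-/

open Finset Function

section EnergyLevel

variable (w : Q → Q → ℤ)

theorem EL_add (ρ : ℕ → Q) (m t : ℕ) :
    EL w ρ (m + t) = EL w ρ m + EL w (fun i => ρ (m + i)) t := by
  simp only [EL, sum_range_add, add_assoc]

theorem EL_nat_mul_of_periodic {ρ : ℕ → Q} {T : ℕ} (hρ : Periodic ρ T) (j : ℕ) :
    EL w ρ (j * T) = j * EL w ρ T := by
  induction j with
  | zero => simp [EL]
  | succ j ih =>
    have hshift : (fun i => ρ (j * T + i)) = ρ := funext fun i => by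
      rw [add_comm]; exact (hρ.nat_mul j) i
    rw [add_mul, one_mul, EL_add, ih, hshift]
    push_cast
    ring

theorem EL_period_nonneg_of_forall_le {ρ : ℕ → Q} {T : ℕ} (hρ : Periodic ρ T) (B : ℤ)
    (hB : ∀ t, B ≤ EL w ρ t) : 0 ≤ EL w ρ T := by
  by_contra! hneg
  have h := hB ((B.natAbs + 1) * T)
  rw [EL_nat_mul_of_periodic w hρ] at h
  push_cast at h
  nlinarith [neg_abs_le B, Int.natCast_natAbs B]

theorem EL_eq_card_sub_card_mul [DecidableEq Q] {W : ℤ}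
    (hw : ∀ i j, w i j = if i = j then 1 else -W) (ρ : ℕ → Q) (T : ℕ) :
    EL w ρ T = #{t ∈ range T | ρ t = ρ (t + 1)} - #{t ∈ range T | ρ t ≠ ρ (t + 1)} * W := by
  simp only [EL, hw, sum_ite, sum_const, nsmul_eq_mul, mul_one, mul_neg]
  ring

end EnergyLevel

theorem EnergyCond.EL_period_nonneg_of_shift {w : Q → Q → ℤ} {c₀ : ℕ} {ρ σ : ℕ → Q}
    (h : EnergyCond w c₀ ρ) (m : ℕ) (hshift : ∀ t, ρ (m + t) = σ t) {T : ℕ} (hσ : Periodic σ T) :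
    0 ≤ EL w σ T := by
  refine EL_period_nonneg_of_forall_le w hσ (-(c₀ + EL w ρ m)) fun t => ?_
  have hρ := h (m + t)
  rw [EL_add, funext hshift] at hρ
  linarith

theorem abs_sub_le_card_filter_ne (v : ℕ → ℤ) (hv : ∀ t, |v (t + 1) - v t| ≤ 1) {a b : ℕ}
    (hab : a ≤ b) : |v b - v a| ≤ #{t ∈ Ico a b | v t ≠ v (t + 1)} := by
  rw [← sum_Ico_sub v hab, natCast_card_filter]
  refine (abs_sum_le_sum_abs _ _).trans (sum_le_sum fun t _ => ?_)
  split_ifs with h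
  · exact hv t
  · simp [not_not.mp h]

theorem two_mul_abs_sub_le_card_filter_ne (v : ℕ → ℤ) (hv : ∀ t, |v (t + 1) - v t| ≤ 1)
    {t T : ℕ} (htT : t ≤ T) (hT : v T = v 0) :
    2 * |v t - v 0| ≤ #{s ∈ range T | v s ≠ v (s + 1)} := by
  have hsplit : #{s ∈ range T | v s ≠ v (s + 1)} =
      #{s ∈ Ico 0 t | v s ≠ v (s + 1)} + #{s ∈ Ico t T | v s ≠ v (s + 1)} := by
    rw [range_eq_Ico, card_filter, card_filter, card_filter, sum_Ico_consecutive _ t.zero_le htT]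
  have h₁ := abs_sub_le_card_filter_ne v hv t.zero_le
  have h₂ := abs_sub_le_card_filter_ne v hv htT
  rw [hT, abs_sub_comm] at h₂
  push_cast [hsplit]
  linarith

theorem Nat.exists_mem_Ico_and_not_succ {P : ℕ → Prop} {a b : ℕ} (hab : a ≤ b) (ha : P a)
    (hb : ¬P b) : ∃ t ∈ Ico a b, P t ∧ ¬P (t + 1) := by
  induction b, hab using Nat.le_induction with
  | base => exact absurd ha hb
  | succ b hab ih =>
    by_cases hPb : P b
    · exact ⟨b, mem_Ico.mpr ⟨hab, b.lt_succ_self⟩, hPb, hb⟩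
    · obtain ⟨t, ht, hPt, hPt'⟩ := ih hPb
      exact ⟨t, mem_Ico.mpr ⟨(mem_Ico.mp ht).1, (mem_Ico.mp ht).2.trans b.lt_succ_self⟩, hPt, hPt'⟩

theorem Function.exists_forall_ge_iterate_mem_periodicPts {α : Type*} [Finite α] (f : α → α)
    (x : α) : ∃ N, ∀ m ≥ N, f^[m] x ∈ periodicPts f := by
  obtain ⟨a, b, hab, heq⟩ : ∃ a b, a < b ∧ f^[a] x = f^[b] x := by
    obtain ⟨a, b, hne, heq⟩ := Finite.exists_ne_map_eq_of_infinite (f^[·] x)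
    rcases hne.lt_or_gt with h | h
    exacts [⟨a, b, h, heq⟩, ⟨b, a, h, heq.symm⟩]
  refine ⟨a, fun m hm => mk_mem_periodicPts (n := b - a) (by omega) ?_⟩
  calc f^[b - a] (f^[m] x) = f^[m - a] (f^[b] x) := by
        rw [← iterate_add_apply, ← iterate_add_apply]; congr 1; omega
    _ = f^[m] x := by rw [← heq, ← iterate_add_apply]; congr 1; omega

section Transducer

variable {M : Type*}

def transducerStep (αu : M → Q → M) (αn : M → Q → Q) (x : M × Q) : M × Q :=
  (αu x.1 x.2, αn x.1 x.2)

theorem transOutcome_univ_iterate_transducerStep {E : Q → Q → Prop} {αu : M → Q → M}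
    {αn : M → Q → Q} (hvalid : ∀ m q, E q (αn m q)) (m₀ : M) (q₀ : Q) :
    TransOutcome Set.univ E αu αn m₀ q₀ (fun i => ((transducerStep αu αn)^[i] (m₀, q₀)).2) := by
  have hmem : ∀ i, MemRun αu m₀ (fun i => ((transducerStep αu αn)^[i] (m₀, q₀)).2) i =
      ((transducerStep αu αn)^[i] (m₀, q₀)).1 := by
    intro i
    induction i with
    | zero => rfl
    | succ i ih => rw [MemRun, ih, iterate_succ_apply']; rfl
  refine ⟨rfl, fun i => ?_, fun i _ => ?_⟩
  · dsimp only; rw [iterate_succ_apply']; exact hvalid _ _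
  · dsimp only; rw [iterate_succ_apply', hmem]; rfl

theorem card_filter_range_minimalPeriod_le_card [Fintype M] (F : M × Q → M × Q) (x : M × Q)
    {P : Q → Prop} [DecidablePred P] (hP : {q | P q}.Subsingleton) :
    #{t ∈ range (minimalPeriod F x) | P (F^[t] x).2} ≤ Fintype.card M := by
  refine card_le_card_of_injOn (fun t => (F^[t] x).1) (fun _ _ => mem_univ _) ?_
  intro s hs t ht hst
  simp only [coe_filter, mem_range, Set.mem_ofPred_eq] at hs ht
  exact iterate_injOn_Iio_minimalPeriod hs.1 ht.1 (Prod.ext hst (hP hs.2 ht.2))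

end Transducer

section Ladder

def LadderEdge (n : ℕ) (i j : Fin n) : Prop :=
  (i : ℕ) + 1 = j ∨ (j : ℕ) + 1 = i ∨ ((i : ℕ) = n - 1 ∧ (j : ℕ) = n - 1)

variable {n : ℕ}

theorem LadderEdge.val_eq_of_eq {i j : Fin n} (h : LadderEdge n i j) (hij : i = j) :
    (i : ℕ) = n - 1 := by
  subst hij
  rcases h with h | h | h <;> omega

theorem LadderEdge.abs_sub_le_one {i j : Fin n} (h : LadderEdge n i j) : |(j : ℤ) - i| ≤ 1 := by
  rw [abs_le]
  rcases h with h | h | h <;> omega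

variable {σ : ℕ → Fin n} {T : ℕ}

theorem two_mul_le_card_moves_of_ladderEdge (hσ : Periodic σ T)
    (hedge : ∀ s, LadderEdge n (σ s) (σ (s + 1))) {t : ℕ} (htT : t ≤ T) (h0 : (σ 0 : ℕ) = 0)
    (ht : (σ t : ℕ) = n - 1) : 2 * (n - 1) ≤ #{s ∈ range T | σ s ≠ σ (s + 1)} := by
  have h := two_mul_abs_sub_le_card_filter_ne (fun s => (σ s : ℤ))
    (fun s => (hedge s).abs_sub_le_one) htT (by rw [hσ.eq])
  have hmoves : {s ∈ range T | (σ s : ℤ) ≠ σ (s + 1)} = {s ∈ range T | σ s ≠ σ (s + 1)} := by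
    simp only [ne_eq, Nat.cast_inj, Fin.val_inj]
  rw [hmoves, ht, h0, Nat.cast_zero, sub_zero, abs_of_nonneg (by positivity)] at h
  exact_mod_cast h

theorem card_loops_lt_card_last_of_ladderEdge (hσ : Periodic σ T)
    (hedge : ∀ s, LadderEdge n (σ s) (σ (s + 1))) {t : ℕ} (htT : t < T) (h0 : (σ 0 : ℕ) ≠ n - 1)
    (ht : (σ t : ℕ) = n - 1) :
    #{s ∈ range T | σ s = σ (s + 1)} < #{s ∈ range T | (σ s : ℕ) = n - 1} := by
  refine card_lt_card ((ssubset_iff_of_subset fun s hs => ?_).mpr ?_)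
  · rw [mem_filter] at hs ⊢
    exact ⟨hs.1, (hedge s).val_eq_of_eq hs.2⟩
  · obtain ⟨s, hs, hs_last, hs_next⟩ := Nat.exists_mem_Ico_and_not_succ
      (P := fun s => (σ s : ℕ) = n - 1) htT.le ht (by rwa [hσ.eq])
    refine ⟨s, mem_filter.mpr ⟨mem_range.mpr (mem_Ico.mp hs).2, hs_last⟩, fun hloop => ?_⟩
    exact hs_next ((mem_filter.mp hloop).2 ▸ hs_last)

theorem le_card_last_of_ladderEdge {W : ℕ} (hn : 2 ≤ n) (hW : 1 ≤ W) {w : Fin n → Fin n → ℤ}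
    (hw : ∀ i j, w i j = if i = j then 1 else -(W : ℤ)) (hT : 0 < T) (hσ : Periodic σ T)
    (hedge : ∀ s, LadderEdge n (σ s) (σ (s + 1))) (h0 : (σ 0 : ℕ) = 0) (hEL : 0 ≤ EL w σ T) :
    2 * (n - 1) * W + 1 ≤ #{s ∈ range T | (σ s : ℕ) = n - 1} := by
  set loops := #{s ∈ range T | σ s = σ (s + 1)}
  set moves := #{s ∈ range T | σ s ≠ σ (s + 1)}
  have hT_eq : loops + moves = T := by
    simpa using card_filter_add_card_filter_not (s := range T) (fun s => σ s = σ (s + 1))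
  have hbalance : moves * W ≤ loops := by
    rw [EL_eq_card_sub_card_mul w hw] at hEL
    exact_mod_cast (by linarith : (moves : ℤ) * W ≤ loops)
  obtain ⟨t, ht, hloop⟩ : ∃ t ∈ range T, σ t = σ (t + 1) := by
    by_contra! h
    have : loops = 0 := card_eq_zero.mpr (filter_eq_empty_iff.mpr h)
    nlinarith
  have ht_last := (hedge t).val_eq_of_eq hloop
  have hmoves := two_mul_le_card_moves_of_ladderEdge hσ hedge (mem_range.mp ht).le h0 ht_last
  calc 2 * (n - 1) * W + 1 ≤ moves * W + 1 := by gcongr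
    _ ≤ loops + 1 := by omega
    _ ≤ _ := card_loops_lt_card_last_of_ladderEdge hσ hedge (mem_range.mp ht) (by omega) ht_last

end Ladder

theorem stmt2_general (n W : ℕ) (hn : 2 ≤ n) (hW : 1 ≤ W)
    (E : Fin n → Fin n → Prop)
    (hE : ∀ i j, E i j ↔
      ((i : ℕ) + 1 = (j : ℕ) ∨ (j : ℕ) + 1 = (i : ℕ) ∨
        ((i : ℕ) = n - 1 ∧ (j : ℕ) = n - 1)))
    (w : Fin n → Fin n → ℤ)
    (hw : ∀ i j, w i j = if i = j then 1 else -(W : ℤ))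
    (p : Fin n → ℕ)
    (hp : ∀ i, p i = if (i : ℕ) = 0 then 0 else 1)
    (M : Type*) [Fintype M] (m₀ : M) (αu : M → Fin n → M) (αn : M → Fin n → Fin n)
    (hvalid : ∀ m q, E q (αn m q))
    (q₀ : Fin n)
    (hwin : ∃ c₀ : ℕ, ∀ ρ, TransOutcome (Set.univ : Set (Fin n)) E αu αn m₀ q₀ ρ →
      ParityCond p ρ ∧ EnergyCond w c₀ ρ) :
    2 * (n - 1) * W + 1 ≤ Fintype.card M := by
  obtain ⟨c₀, hwin⟩ := hwin
  set F := transducerStep αu αn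
  set ρ : ℕ → Fin n := fun i => (F^[i] (m₀, q₀)).2
  obtain ⟨⟨q, hq_inf, hq_even, -⟩, henergy⟩ :=
    hwin ρ (transOutcome_univ_iterate_transducerStep hvalid m₀ q₀)
  have hq : (q : ℕ) = 0 := by
    by_contra h
    simp [hp, h] at hq_even
  obtain ⟨N, hN⟩ := exists_forall_ge_iterate_mem_periodicPts F (m₀, q₀)
  obtain ⟨m, hmN, hm⟩ := hq_inf N
  set x := F^[m] (m₀, q₀)
  set σ : ℕ → Fin n := fun t => (F^[t] x).2
  have hσ : Periodic σ (minimalPeriod F x) := fun t => by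
    simp only [σ, iterate_add_apply, iterate_minimalPeriod]
  have hedge : ∀ t, LadderEdge n (σ t) (σ (t + 1)) := fun t => by
    simp only [σ, iterate_succ_apply']
    exact (hE _ _).1 (hvalid _ _)
  have hEL : 0 ≤ EL w σ (minimalPeriod F x) :=
    henergy.EL_period_nonneg_of_shift m
      (fun t => by simp only [ρ, σ, x, add_comm m, iterate_add_apply]) hσ
  calc 2 * (n - 1) * W + 1 ≤ #{t ∈ range (minimalPeriod F x) | (σ t : ℕ) = n - 1} :=
        le_card_last_of_ladderEdge hn hW hw (minimalPeriod_pos_of_mem_periodicPts (hN m hmN)) hσ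
          hedge (show (ρ m : ℕ) = 0 by rw [hm, hq]) hEL
    _ ≤ Fintype.card M :=
        card_filter_range_minimalPeriod_le_card F x fun _ ha _ hb => Fin.ext (Eq.trans ha hb.symm)

/-- In the ladder game (a player-1 game, so `Q1 = Set.univ`), every
finite-memory strategy (given by a transducer with memory set `M`) winning from
state `0` for the energy parity objective with some finite initial credit has
memory size at least `2·(n−1)·W + 1`. -/
theorem stmt2 (n W : ℕ) (hn : 2 ≤ n) (hW : 1 ≤ W)
    (E : Fin n → Fin n → Prop)
    (hE : ∀ i j, E i j ↔
      ((i : ℕ) + 1 = (j : ℕ) ∨ (j : ℕ) + 1 = (i : ℕ) ∨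
        ((i : ℕ) = n - 1 ∧ (j : ℕ) = n - 1)))
    (w : Fin n → Fin n → ℤ)
    (hw : ∀ i j, w i j = if i = j then 1 else -(W : ℤ))
    (p : Fin n → ℕ)
    (hp : ∀ i, p i = if (i : ℕ) = 0 then 0 else 1)
    (M : Type*) [Fintype M] (m₀ : M) (αu : M → Fin n → M) (αn : M → Fin n → Fin n)
    (hvalid : ∀ m q, E q (αn m q))
    (q₀ : Fin n) (hq₀ : (q₀ : ℕ) = 0)
    (hwin : ∃ c₀ : ℕ, ∀ ρ, TransOutcome (Set.univ : Set (Fin n)) E αu αn m₀ q₀ ρ →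
      ParityCond p ρ ∧ EnergyCond w c₀ ρ) :
    2 * (n - 1) * W + 1 ≤ Fintype.card M :=
  stmt2_general n W hn hW E hE w hw p hp M m₀ αu αn hvalid q₀ hwin
end

section
/- A memoryless player-1 strategy σ is good-for-energy in a state q₀ of an energy parity game ⟨G,p,w⟩ if and only if, in the restriction of the graph G_σ to the states reachable from q₀, every cycle (not necessarily simple) has nonnegative sum of weights, and every cycle with sum of weights equal to 0 has even minimal priority. -/
/-
Outcomes of a memoryless strategy `σ` from `q₀` are exactly the infinite paths of `G_σ` from `q₀`,
and every state they visit is reachable from `q₀`; so every cycle of an outcome is a reachable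
cycle of `G_σ`. Conversely, a reachable cycle of `G_σ` is a cycle of the lasso-shaped outcome
that walks from `q₀` to the cycle and then goes around it forever.
-/

variable {Q : Type*}

/-- An outcome of the memoryless player-1 strategy `σ` from `q₀`. -/
def MemlessOutcome (Q1 : Set Q) (E : Q → Q → Prop) (σ : Q → Q) (q₀ : Q)
    (ρ : ℕ → Q) : Prop :=
  ρ 0 = q₀ ∧ IsPlay E ρ ∧ ∀ i, ρ i ∈ Q1 → ρ (i + 1) = σ (ρ i)

/-- The minimal priority on the cycle `ρ i, …, ρ (i+k)` is even. -/
def MinPrioEven (p : Q → ℕ) (ρ : ℕ → Q) (i k : ℕ) : Prop :=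
  ∃ j ∈ Finset.Icc i (i + k), Even (p (ρ j)) ∧
    ∀ l ∈ Finset.Icc i (i + k), p (ρ j) ≤ p (ρ l)

/-- The memoryless strategy `σ` is good-for-energy in `q`: every cycle of every outcome
of `σ` from `q` has positive energy level, or zero energy level and even minimal
priority. -/
def GoodForEnergy (Q1 : Set Q) (E : Q → Q → Prop) (p : Q → ℕ) (w : Q → Q → ℤ)
    (σ : Q → Q) (q : Q) : Prop :=
  ∀ ρ, MemlessOutcome Q1 E σ q ρ → ∀ i k, 0 < k → ρ i = ρ (i + k) →
    0 < ∑ j ∈ Finset.Ico i (i + k), w (ρ j) (ρ (j + 1)) ∨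
      (∑ j ∈ Finset.Ico i (i + k), w (ρ j) (ρ (j + 1)) = 0 ∧ MinPrioEven p ρ i k)

/-- The graph `G_σ` obtained by fixing the memoryless player-1 strategy `σ`: at
player-1 states only the `σ`-edge remains; at player-2 states all edges remain. -/
def GSigma (Q1 : Set Q) (E : Q → Q → Prop) (σ : Q → Q) (q q' : Q) : Prop :=
  (q ∈ Q1 ∧ q' = σ q) ∨ (q ∉ Q1 ∧ E q q')

open Finset

section Sequences

variable {α : Type*} {r : α → α → Prop}

theorem Relation.ReflTransGen.exists_seq {a b : α} (h : Relation.ReflTransGen r a b) :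
    ∃ (m : ℕ) (f : ℕ → α), f 0 = a ∧ f m = b ∧ ∀ j < m, r (f j) (f (j + 1)) := by
  induction h using Relation.ReflTransGen.head_induction_on with
  | refl => exact ⟨0, fun _ => b, rfl, rfl, by simp⟩
  | @head a a' hstep _ ih =>
    obtain ⟨m, f, hf0, hfm, hf⟩ := ih
    refine ⟨m + 1, fun n => Nat.casesOn n a f, rfl, hfm, ?_⟩
    rintro (_ | j) hj
    · simpa [hf0] using hstep
    · exact hf j (by omega)

theorem Relation.reflTransGen_of_forall_step {f : ℕ → α} (hf : ∀ n, r (f n) (f (n + 1)))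
    (n : ℕ) : Relation.ReflTransGen r (f 0) (f n) := by
  induction n with
  | zero => rfl
  | succ n ih => exact ih.tail (hf n)

theorem forall_step_mod_of_cycle {k : ℕ} {c : ℕ → α} (hk : 0 < k) (hck : c 0 = c k)
    (hc : ∀ j < k, r (c j) (c (j + 1))) (n : ℕ) : r (c (n % k)) (c ((n + 1) % k)) := by
  have hlt : n % k < k := Nat.mod_lt n hk
  rw [← Nat.mod_add_mod n k 1]
  rcases (show n % k + 1 ≤ k from hlt).lt_or_eq with hsucc | hsucc
  · rw [Nat.mod_eq_of_lt hsucc]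
    exact hc _ hlt
  · rw [hsucc, Nat.mod_self, hck]
    simpa only [hsucc] using hc _ hlt

def seqAppend (m : ℕ) (f g : ℕ → α) (n : ℕ) : α :=
  if n < m then f n else g (n - m)

theorem seqAppend_zero {m : ℕ} {f g : ℕ → α} (hfg : f m = g 0) : seqAppend m f g 0 = f 0 := by
  rcases Nat.eq_zero_or_pos m with rfl | hm
  · simp [seqAppend, hfg]
  · simp [seqAppend, hm]

theorem seqAppend_add (m : ℕ) (f g : ℕ → α) (n : ℕ) : seqAppend m f g (m + n) = g n := by
  simp [seqAppend]

theorem forall_step_seqAppend {m : ℕ} {f g : ℕ → α} (hf : ∀ j < m, r (f j) (f (j + 1)))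
    (hg : ∀ n, r (g n) (g (n + 1))) (hfg : f m = g 0) (n : ℕ) :
    r (seqAppend m f g n) (seqAppend m f g (n + 1)) := by
  rcases lt_or_ge n m with hn | hn
  · rcases (show n + 1 ≤ m from hn).lt_or_eq with hn' | hn'
    · simpa [seqAppend, hn, hn'] using hf n hn
    · simpa [seqAppend, hn, hn', hfg] using hf n hn
  · obtain ⟨d, rfl⟩ := Nat.exists_eq_add_of_le hn
    rw [add_assoc, seqAppend_add, seqAppend_add]
    exact hg d

end Sequences

theorem minPrioEven_iff (p : Q → ℕ) (ρ : ℕ → Q) (i k : ℕ) :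
    MinPrioEven p ρ i k ↔ ∃ j ∈ range (k + 1), Even (p (ρ (i + j))) ∧
      ∀ l ∈ range (k + 1), p (ρ (i + j)) ≤ p (ρ (i + l)) := by
  have hIcc : Icc i (i + k) = (range (k + 1)).map (addLeftEmbedding i) := by
    ext n
    simp only [mem_Icc, mem_map, mem_range, addLeftEmbedding_apply]
    constructor
    · intro hn
      exact ⟨n - i, by omega, by omega⟩
    · rintro ⟨j, hj, rfl⟩
      omega
  simp [MinPrioEven, hIcc]

def IsGoodCycle (p : Q → ℕ) (w : Q → Q → ℤ) (k : ℕ) (c : ℕ → Q) : Prop :=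
  0 ≤ ∑ j ∈ range k, w (c j) (c (j + 1)) ∧
    (∑ j ∈ range k, w (c j) (c (j + 1)) = 0 →
      ∃ j ∈ range (k + 1), Even (p (c j)) ∧ ∀ l ∈ range (k + 1), p (c j) ≤ p (c l))

theorem IsGoodCycle.congr {p : Q → ℕ} {w : Q → Q → ℤ} {k : ℕ} {c c' : ℕ → Q}
    (h : ∀ j ≤ k, c j = c' j) (hc : IsGoodCycle p w k c) : IsGoodCycle p w k c' := by
  have hsum : ∑ j ∈ range k, w (c j) (c (j + 1)) = ∑ j ∈ range k, w (c' j) (c' (j + 1)) :=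
    sum_congr rfl fun j hj => by
      rw [mem_range] at hj
      rw [h j hj.le, h (j + 1) hj]
  have hmem : ∀ j ∈ range (k + 1), c j = c' j := fun j hj =>
    h j (Nat.lt_succ_iff.mp (mem_range.mp hj))
  obtain ⟨hnonneg, hzero⟩ := hc
  refine ⟨hsum ▸ hnonneg, fun h0 => ?_⟩
  obtain ⟨j, hj, heven, hmin⟩ := hzero (hsum ▸ h0)
  refine ⟨j, hj, hmem j hj ▸ heven, fun l hl => ?_⟩
  rw [← hmem j hj, ← hmem l hl]
  exact hmin l hl

theorem isGoodCycle_shift_iff (p : Q → ℕ) (w : Q → Q → ℤ) (ρ : ℕ → Q) (i k : ℕ) :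
    IsGoodCycle p w k (fun n => ρ (i + n)) ↔
      0 < ∑ j ∈ Ico i (i + k), w (ρ j) (ρ (j + 1)) ∨
        (∑ j ∈ Ico i (i + k), w (ρ j) (ρ (j + 1)) = 0 ∧ MinPrioEven p ρ i k) := by
  have hsum : ∑ j ∈ Ico i (i + k), w (ρ j) (ρ (j + 1)) =
      ∑ j ∈ range k, w (ρ (i + j)) (ρ (i + (j + 1))) := by
    rw [sum_Ico_eq_sum_range, add_tsub_cancel_left]
    rfl
  rw [IsGoodCycle, minPrioEven_iff, hsum]
  constructor
  · rintro ⟨hnonneg, hzero⟩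
    rcases hnonneg.lt_or_eq with hpos | h0
    · exact Or.inl hpos
    · exact Or.inr ⟨h0.symm, hzero h0.symm⟩
  · rintro (hpos | ⟨h0, hmin⟩)
    · exact ⟨hpos.le, fun h0 => absurd h0 hpos.ne'⟩
    · exact ⟨h0.ge, fun _ => hmin⟩

section Strategy

variable {Q1 : Set Q} {E : Q → Q → Prop} {σ : Q → Q} {p : Q → ℕ} {w : Q → Q → ℤ} {q₀ : Q}

theorem memlessOutcome_iff (hσ : ∀ s ∈ Q1, E s (σ s)) {ρ : ℕ → Q} :
    MemlessOutcome Q1 E σ q₀ ρ ↔ ρ 0 = q₀ ∧ ∀ n, GSigma Q1 E σ (ρ n) (ρ (n + 1)) := by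
  constructor
  · rintro ⟨h0, hplay, hρσ⟩
    refine ⟨h0, fun n => ?_⟩
    by_cases hn : ρ n ∈ Q1
    · exact Or.inl ⟨hn, hρσ n hn⟩
    · exact Or.inr ⟨hn, hplay n⟩
  · rintro ⟨h0, hstep⟩
    refine ⟨h0, fun n => ?_, fun n hn => ?_⟩
    · rcases hstep n with ⟨hn, heq⟩ | ⟨_, hE⟩
      · exact heq ▸ hσ _ hn
      · exact hE
    · rcases hstep n with ⟨_, heq⟩ | ⟨hn', _⟩
      · exact heq
      · exact absurd hn hn'

theorem goodForEnergy_iff_forall_isGoodCycle :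
    GoodForEnergy Q1 E p w σ q₀ ↔ ∀ ρ, MemlessOutcome Q1 E σ q₀ ρ → ∀ i k, 0 < k →
      ρ i = ρ (i + k) → IsGoodCycle p w k (fun n => ρ (i + n)) := by
  simp only [GoodForEnergy, isGoodCycle_shift_iff]

theorem GoodForEnergy.isGoodCycle (hσ : ∀ s ∈ Q1, E s (σ s))
    (h : GoodForEnergy Q1 E p w σ q₀) {k : ℕ} {c : ℕ → Q} (hk : 0 < k) (hck : c 0 = c k)
    (hc : ∀ j < k, GSigma Q1 E σ (c j) (c (j + 1)))
    (hreach : Relation.ReflTransGen (GSigma Q1 E σ) q₀ (c 0)) : IsGoodCycle p w k c := by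
  obtain ⟨m, f, hf0, hfm, hf⟩ := hreach.exists_seq
  set ρ := seqAppend m f (fun n => c (n % k))
  have hfg : f m = c (0 % k) := by rw [hfm, Nat.zero_mod]
  have hρ : MemlessOutcome Q1 E σ q₀ ρ := (memlessOutcome_iff hσ).2
    ⟨(seqAppend_zero (g := fun n => c (n % k)) hfg).trans hf0,
      forall_step_seqAppend hf (forall_step_mod_of_cycle hk hck hc) hfg⟩
  have hρ_add (n : ℕ) : ρ (m + n) = c (n % k) := seqAppend_add m f _ n
  have hcycle : ρ m = ρ (m + k) := by
    rw [hρ_add k, Nat.mod_self, ← Nat.zero_mod k, ← hρ_add 0, add_zero]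
  refine (goodForEnergy_iff_forall_isGoodCycle.1 h ρ hρ m k hk hcycle).congr fun j hj => ?_
  rw [hρ_add]
  rcases hj.lt_or_eq with hj | rfl
  · rw [Nat.mod_eq_of_lt hj]
  · rw [Nat.mod_self, hck]

theorem goodForEnergy_of_forall_isGoodCycle (hσ : ∀ s ∈ Q1, E s (σ s))
    (h : ∀ (k : ℕ) (c : ℕ → Q), 0 < k → c 0 = c k →
      (∀ j < k, GSigma Q1 E σ (c j) (c (j + 1))) →
      (∀ j ≤ k, Relation.ReflTransGen (GSigma Q1 E σ) q₀ (c j)) → IsGoodCycle p w k c) :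
    GoodForEnergy Q1 E p w σ q₀ := by
  refine goodForEnergy_iff_forall_isGoodCycle.2 fun ρ hρ i k hk hik => ?_
  obtain ⟨h0, hstep⟩ := (memlessOutcome_iff hσ).1 hρ
  refine h k _ hk hik (fun j _ => hstep (i + j)) fun j _ => ?_
  exact h0 ▸ Relation.reflTransGen_of_forall_step hstep (i + j)

end Strategy

theorem stmt8_general {Q : Type*} (Q1 : Set Q) (E : Q → Q → Prop)
    (p : Q → ℕ) (w : Q → Q → ℤ)
    (σ : Q → Q) (hσ : ∀ s ∈ Q1, E s (σ s)) (q₀ : Q) :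
    GoodForEnergy Q1 E p w σ q₀ ↔
      ∀ (k : ℕ) (c : ℕ → Q), 0 < k → c 0 = c k →
        (∀ j < k, GSigma Q1 E σ (c j) (c (j + 1))) →
        (∀ j ≤ k, Relation.ReflTransGen (GSigma Q1 E σ) q₀ (c j)) →
        0 ≤ ∑ j ∈ Finset.range k, w (c j) (c (j + 1)) ∧
          (∑ j ∈ Finset.range k, w (c j) (c (j + 1)) = 0 →
            ∃ j ∈ Finset.range (k + 1), Even (p (c j)) ∧
              ∀ l ∈ Finset.range (k + 1), p (c j) ≤ p (c l)) :=
  ⟨fun h _ _ hk hck hc hreach => h.isGoodCycle hσ hk hck hc (hreach 0 (Nat.zero_le _)),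
    goodForEnergy_of_forall_isGoodCycle hσ⟩

/-- a memoryless player-1 strategy `σ` is good-for-energy in `q₀` iff in
the restriction of `G_σ` to the states reachable from `q₀` every cycle has nonnegative
sum of weights, and every cycle of weight `0` has even minimal priority. -/
theorem stmt8 {Q : Type*} [Fintype Q] (Q1 : Set Q) (E : Q → Q → Prop)
    (hE : ∀ q, ∃ q', E q q') (p : Q → ℕ) (w : Q → Q → ℤ)
    (σ : Q → Q) (hσ : ∀ s ∈ Q1, E s (σ s)) (q₀ : Q) :
    GoodForEnergy Q1 E p w σ q₀ ↔
      ∀ (k : ℕ) (c : ℕ → Q), 0 < k → c 0 = c k →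
        (∀ j < k, GSigma Q1 E σ (c j) (c (j + 1))) →
        (∀ j ≤ k, Relation.ReflTransGen (GSigma Q1 E σ) q₀ (c j)) →
        0 ≤ ∑ j ∈ Finset.range k, w (c j) (c (j + 1)) ∧
          (∑ j ∈ Finset.range k, w (c j) (c (j + 1)) = 0 →
            ∃ j ∈ Finset.range (k + 1), Even (p (c j)) ∧
              ∀ l ∈ Finset.range (k + 1), p (c j) ≤ p (c l)) :=
  stmt8_general Q1 E p w σ hσ q₀
end

section
/- Let σ be a memoryless player-1 strategy in an energy parity game with n states and largest absolute weight W that is good-for-energy in a state q. Then every finite prefix γ of every outcome of σ from q satisfies EL(w,γ) ≥ −(n−1)·W; in particular σ satisfies the energy condition from q with initial credit (n−1)·W. -/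
/-! Induction on the length of the prefix. A prefix with fewer than `n` edges loses at most `W`
per edge. A longer prefix visits some state twice; cutting out the cycle in between leaves a
shorter prefix of another outcome of the memoryless strategy `σ`, and the removed cycle has
nonnegative energy level because `σ` is good-for-energy in `q`. -/

variable {Q : Type*}

open Finset

section CycleRemoval

variable {ρ : ℕ → Q} {a k : ℕ}

def cutCycle (ρ : ℕ → Q) (a k : ℕ) : ℕ → Q :=
  fun j => if j < a then ρ j else ρ (j + k)

lemma cutCycle_of_le (h : ρ a = ρ (a + k)) {j : ℕ} (hj : j ≤ a) :
    cutCycle ρ a k j = ρ j := by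
  rcases hj.lt_or_eq with hj | rfl
  · simp [cutCycle, hj]
  · simp [cutCycle, h]

lemma cutCycle_of_ge {j : ℕ} (hj : a ≤ j) : cutCycle ρ a k j = ρ (j + k) := by
  simp [cutCycle, hj.not_gt]

lemma exists_cutCycle_step (h : ρ a = ρ (a + k)) (j : ℕ) :
    ∃ i, cutCycle ρ a k j = ρ i ∧ cutCycle ρ a k (j + 1) = ρ (i + 1) := by
  rcases lt_or_ge j a with hj | hj
  · exact ⟨j, cutCycle_of_le h hj.le, cutCycle_of_le h hj⟩
  · refine ⟨j + k, cutCycle_of_ge hj, ?_⟩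
    rw [cutCycle_of_ge (by omega), add_right_comm]

lemma MemlessOutcome.cutCycle {Q1 : Set Q} {E : Q → Q → Prop} {σ : Q → Q} {q : Q}
    (hρ : MemlessOutcome Q1 E σ q ρ) (h : ρ a = ρ (a + k)) :
    MemlessOutcome Q1 E σ q (cutCycle ρ a k) := by
  obtain ⟨hρ0, hplay, hσ⟩ := hρ
  refine ⟨by rw [cutCycle_of_le h a.zero_le, hρ0], fun j => ?_, fun j => ?_⟩
  all_goals obtain ⟨i, hi, hi1⟩ := exists_cutCycle_step h j
  · rw [hi, hi1]
    exact hplay i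
  · rw [hi, hi1]
    exact hσ i

lemma EL_cutCycle_add (w : Q → Q → ℤ) (h : ρ a = ρ (a + k)) {m : ℕ} (ham : a ≤ m) :
    EL w (cutCycle ρ a k) m + ∑ j ∈ Ico a (a + k), w (ρ j) (ρ (j + 1)) =
      EL w ρ (m + k) := by
  have hprefix : ∑ j ∈ range a, w (cutCycle ρ a k j) (cutCycle ρ a k (j + 1)) =
      ∑ j ∈ range a, w (ρ j) (ρ (j + 1)) := by
    refine sum_congr rfl fun j hj => ?_
    rw [cutCycle_of_le h (mem_range.1 hj).le, cutCycle_of_le h (mem_range.1 hj)]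
  have hsuffix : ∑ j ∈ Ico a m, w (cutCycle ρ a k j) (cutCycle ρ a k (j + 1)) =
      ∑ j ∈ Ico (a + k) (m + k), w (ρ j) (ρ (j + 1)) := by
    rw [← sum_Ico_add']
    refine sum_congr rfl fun j hj => ?_
    have haj := (mem_Ico.1 hj).1
    rw [cutCycle_of_ge haj, cutCycle_of_ge (by omega), add_right_comm]
  unfold EL
  rw [← sum_range_add_sum_Ico _ ham, hprefix, hsuffix,
    ← sum_range_add_sum_Ico _ (by omega : a ≤ m + k),
    ← sum_Ico_consecutive _ (by omega : a ≤ a + k) (by omega : a + k ≤ m + k)]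
  ring

end CycleRemoval

lemma exists_cycle_of_card_le [Fintype Q] (ρ : ℕ → Q) {m : ℕ} (hm : Fintype.card Q ≤ m) :
    ∃ a k, 0 < k ∧ a + k ≤ m ∧ ρ a = ρ (a + k) := by
  obtain ⟨x, y, hxy, hρxy⟩ := Fintype.exists_ne_map_eq_of_card_lt (fun i : Fin (m + 1) => ρ i)
    (by simpa using Nat.lt_succ_of_le hm)
  rcases lt_or_gt_of_ne (Fin.val_ne_of_ne hxy) with hlt | hlt
  · exact ⟨x, y - x, by omega, by omega, by rwa [Nat.add_sub_cancel' hlt.le]⟩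
  · exact ⟨y, x - y, by omega, by omega, by rw [Nat.add_sub_cancel' hlt.le]; exact hρxy.symm⟩

lemma neg_mul_le_EL {E : Q → Q → Prop} {w : Q → Q → ℤ} {W : ℤ}
    (hW : ∀ q q', E q q' → |w q q'| ≤ W) {ρ : ℕ → Q} (hρ : IsPlay E ρ) (m : ℕ) :
    -(m * W) ≤ EL w ρ m :=
  calc -(m * W) = ∑ _i ∈ range m, -W := by simp
    _ ≤ EL w ρ m := sum_le_sum fun i _ => neg_le_of_abs_le (hW _ _ (hρ i))

namespace GoodForEnergy

variable {Q1 : Set Q} {E : Q → Q → Prop} {p : Q → ℕ} {w : Q → Q → ℤ} {σ : Q → Q}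
  {q : Q}

lemma cycle_nonneg (hg : GoodForEnergy Q1 E p w σ q) {ρ : ℕ → Q}
    (hρ : MemlessOutcome Q1 E σ q ρ) {i k : ℕ} (hk : 0 < k) (h : ρ i = ρ (i + k)) :
    0 ≤ ∑ j ∈ Ico i (i + k), w (ρ j) (ρ (j + 1)) :=
  (hg ρ hρ i k hk h).elim le_of_lt fun h => h.1.ge

lemma neg_le_EL [Fintype Q] {W : ℕ} (hW : ∀ q q', E q q' → |w q q'| ≤ W)
    (hg : GoodForEnergy Q1 E p w σ q) {ρ : ℕ → Q} (hρ : MemlessOutcome Q1 E σ q ρ)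
    (m : ℕ) :
    -(((Fintype.card Q - 1) * W : ℕ) : ℤ) ≤ EL w ρ m := by
  induction m using Nat.strong_induction_on generalizing ρ with
  | _ m ih =>
  by_cases hm : m < Fintype.card Q
  · have hmW : m * W ≤ (Fintype.card Q - 1) * W := Nat.mul_le_mul_right _ (by omega)
    calc -(((Fintype.card Q - 1) * W : ℕ) : ℤ) ≤ -(m * W) :=
          neg_le_neg (by exact_mod_cast hmW)
      _ ≤ EL w ρ m := neg_mul_le_EL hW hρ.2.1 m
  · obtain ⟨a, k, hk, hakm, hcyc⟩ := exists_cycle_of_card_le ρ (not_lt.1 hm)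
    have hsplit := EL_cutCycle_add w hcyc (show a ≤ m - k by omega)
    rw [Nat.sub_add_cancel (by omega)] at hsplit
    have hshort := ih (m - k) (by omega) (hρ.cutCycle hcyc)
    have hcycle := hg.cycle_nonneg hρ hk hcyc
    linarith

end GoodForEnergy

theorem stmt9_general {Q : Type*} [Fintype Q] (Q1 : Set Q) (E : Q → Q → Prop)
    (p : Q → ℕ) (w : Q → Q → ℤ)
    (n W : ℕ) (hn : Fintype.card Q = n)
    (hWmax : ∀ q q', E q q' → |w q q'| ≤ (W : ℤ))
    (σ : Q → Q) (q : Q)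
    (hgfe : GoodForEnergy Q1 E p w σ q) :
    ∀ ρ, MemlessOutcome Q1 E σ q ρ →
      (∀ m, -((((n - 1) * W : ℕ)) : ℤ) ≤ EL w ρ m) ∧
        EnergyCond w ((n - 1) * W) ρ := by
  intro ρ hρ
  subst hn
  have hbound := hgfe.neg_le_EL hWmax hρ
  exact ⟨hbound, fun m => neg_le_iff_add_nonneg'.1 (hbound m)⟩

/-- a memoryless strategy good-for-energy in `q` keeps the energy level of
every prefix of every outcome from `q` at least `−(n−1)·W`; in particular it satisfies
the energy condition from `q` with initial credit `(n−1)·W`. -/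
theorem stmt9 {Q : Type*} [Fintype Q] (Q1 : Set Q) (E : Q → Q → Prop)
    (hE : ∀ q, ∃ q', E q q') (p : Q → ℕ) (w : Q → Q → ℤ)
    (n W : ℕ) (hn : Fintype.card Q = n)
    (hWmax : ∀ q q', E q q' → |w q q'| ≤ (W : ℤ))
    (σ : Q → Q) (hσ : ∀ s ∈ Q1, E s (σ s)) (q : Q)
    (hgfe : GoodForEnergy Q1 E p w σ q) :
    ∀ ρ, MemlessOutcome Q1 E σ q ρ →
      (∀ m, -((((n - 1) * W : ℕ)) : ℤ) ≤ EL w ρ m) ∧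
        EnergyCond w ((n - 1) * W) ρ :=
  stmt9_general Q1 E p w n W hn hWmax σ q hgfe
end

section
/- Let π be a memoryless player-2 strategy in an energy parity game ⟨G,p,w⟩ and let q be a state such that every cycle (not necessarily simple) in the restriction of the graph G_π to states reachable from q has either negative sum of weights, or sum of weights equal to 0 and odd minimal priority. Then player 1 does not win the energy parity game from q: for every finite initial credit c₀ and every player-1 strategy σ, the unique outcome of σ against π from q violates the parity condition or the energy condition with credit c₀. -/
variable {Q : Type*}

/-- The history `ρ 0, …, ρ (i-1)` as a list. -/
def Hist (ρ : ℕ → Q) (i : ℕ) : List Q :=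
  (List.range i).map ρ

/-- A (general, history-dependent) strategy for player 1: at every history ending in a
player-1 state `q` it proposes a successor of `q`. -/
def IsStrategy (Q1 : Set Q) (E : Q → Q → Prop) (σ : List Q → Q → Q) : Prop :=
  ∀ h q, q ∈ Q1 → E q (σ h q)

/-- An outcome of strategy `σ` from `q₀`. -/
def IsOutcome (Q1 : Set Q) (E : Q → Q → Prop) (σ : List Q → Q → Q) (q₀ : Q)
    (ρ : ℕ → Q) : Prop :=
  ρ 0 = q₀ ∧ IsPlay E ρ ∧ ∀ i, ρ i ∈ Q1 → ρ (i + 1) = σ (Hist ρ i) (ρ i)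

/-- Player 1 wins the energy parity game from `q₀` (with some finite initial credit). -/
def Player1Wins (Q1 : Set Q) (E : Q → Q → Prop) (p : Q → ℕ) (w : Q → Q → ℤ)
    (q₀ : Q) : Prop :=
  ∃ σ c₀, IsStrategy Q1 E σ ∧
    ∀ ρ, IsOutcome Q1 E σ q₀ ρ → ParityCond p ρ ∧ EnergyCond w c₀ ρ

/-- The play `ρ` is the outcome of the player-1 strategy `σ` against the memoryless
player-2 strategy `π` from `q₀`. -/
def VsMemless (Q1 : Set Q) (E : Q → Q → Prop) (σ : List Q → Q → Q) (π : Q → Q)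
    (q₀ : Q) (ρ : ℕ → Q) : Prop :=
  ρ 0 = q₀ ∧ IsPlay E ρ ∧
    (∀ i, ρ i ∈ Q1 → ρ (i + 1) = σ (Hist ρ i) (ρ i)) ∧
    (∀ i, ρ i ∉ Q1 → ρ (i + 1) = π (ρ i))

/-- The graph `G_π` obtained by fixing the memoryless player-2 strategy `π`: at
player-2 states only the `π`-edge remains; at player-1 states all edges remain. -/
def GPi (Q1 : Set Q) (E : Q → Q → Prop) (π : Q → Q) (q q' : Q) : Prop :=
  (q ∉ Q1 ∧ q' = π q) ∨ (q ∈ Q1 ∧ E q q')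

/-!
Let `q'` be the state of least priority among those visited infinitely often by the outcome `ρ`
of `σ` against `π`, and suppose its priority is even. From some point on `ρ` only visits states
that it visits infinitely often, so between two later consecutive visits to `q'` it runs
through a cycle of `G_π` reachable from `q` whose minimal priority is `p q'`, which is even.
By hypothesis such a cycle has negative weight, so the energy level drops by at least one
between any two such visits, and no finite initial credit can sustain this.
-/

open Filter Relation

def IsLosingCycle (w : Q → Q → ℤ) (p : Q → ℕ) (k : ℕ) (c : ℕ → Q) : Prop :=
  ∑ j ∈ Finset.range k, w (c j) (c (j + 1)) < 0 ∨
    (∑ j ∈ Finset.range k, w (c j) (c (j + 1)) = 0 ∧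
      ∃ j ∈ Finset.range (k + 1), Odd (p (c j)) ∧
        ∀ l ∈ Finset.range (k + 1), p (c j) ≤ p (c l))

theorem IsPlay.reflTransGen {r : Q → Q → Prop} {ρ : ℕ → Q} (h : IsPlay r ρ) :
    ∀ i, ReflTransGen r (ρ 0) (ρ i)
  | 0 => .refl
  | i + 1 => (h.reflTransGen i).tail (h i)

theorem VsMemless.isPlay_gPi {Q1 : Set Q} {E : Q → Q → Prop} {σ : List Q → Q → Q}
    {π : Q → Q} {q₀ : Q} {ρ : ℕ → Q} (h : VsMemless Q1 E σ π q₀ ρ) :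
    IsPlay (GPi Q1 E π) ρ := by
  intro i
  by_cases hi : ρ i ∈ Q1
  · exact .inr ⟨hi, h.2.1 i⟩
  · exact .inl ⟨hi, h.2.2.2 i hi⟩

theorem EL_add_s11 (w : Q → Q → ℤ) (ρ : ℕ → Q) (a k : ℕ) :
    EL w ρ (a + k) = EL w ρ a + ∑ j ∈ Finset.range k, w (ρ (a + j)) (ρ (a + j + 1)) :=
  Finset.sum_range_add _ a k

theorem exists_forall_ge_infOften [Finite Q] (ρ : ℕ → Q) :
    ∃ N, ∀ n ≥ N, InfOften ρ (ρ n) := by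
  have hev : ∀ᶠ n in atTop, ∀ s, InfOften ρ s ∨ ρ n ≠ s := by
    refine eventually_all.2 fun s => ?_
    by_cases hs : InfOften ρ s
    · exact .of_forall fun _ => .inl hs
    · simp only [InfOften, not_forall, not_exists, not_and] at hs
      obtain ⟨N, hN⟩ := hs
      exact eventually_atTop.2 ⟨N, fun n hn => .inr (hN n hn)⟩
  obtain ⟨N, hN⟩ := eventually_atTop.1 hev
  exact ⟨N, fun n hn => (hN n hn (ρ n)).resolve_right (not_not.2 rfl)⟩

theorem EL_lt_of_isLosingCycle (w : Q → Q → ℤ) (p : Q → ℕ) {ρ : ℕ → Q} {a k : ℕ}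
    (hcyc : IsLosingCycle w p k (fun j => ρ (a + j))) (heven : Even (p (ρ a)))
    (hmin : ∀ j ≤ k, p (ρ a) ≤ p (ρ (a + j))) :
    EL w ρ (a + k) < EL w ρ a := by
  rcases hcyc with hneg | ⟨-, j, hj, hodd, hjmin⟩
  · rw [EL_add_s11]
    simp only [Nat.add_assoc] at hneg ⊢
    linarith
  · have hj : j ≤ k := Nat.lt_succ_iff.1 (Finset.mem_range.1 hj)
    have hle : p (ρ (a + j)) ≤ p (ρ a) := hjmin 0 (by simp)
    have hpj : p (ρ (a + j)) = p (ρ a) := le_antisymm hle (hmin j hj)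
    exact absurd (hpj ▸ hodd) (Nat.not_odd_iff_even.2 heven)

theorem exists_lt_of_forall_exists_lt {S : ℕ → Prop} {f : ℕ → ℤ} {a₀ : ℕ} (ha₀ : S a₀)
    (hstep : ∀ a, S a → ∃ b, S b ∧ f b < f a) (C : ℤ) : ∃ a, f a < C := by
  have hdrop : ∀ k : ℕ, ∃ a, S a ∧ f a ≤ f a₀ - k := by
    intro k
    induction k with
    | zero => exact ⟨a₀, ha₀, by simp⟩
    | succ k ih =>
      obtain ⟨a, ha, hfa⟩ := ih
      obtain ⟨b, hb, hfb⟩ := hstep a ha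
      exact ⟨b, hb, by push_cast; linarith⟩
  obtain ⟨a, -, ha⟩ := hdrop (f a₀ - C + 1).toNat
  exact ⟨a, by linarith [Int.self_le_toNat (f a₀ - C + 1)]⟩

theorem stmt11_general {Q : Type*} [Fintype Q] (Q1 : Set Q) (E : Q → Q → Prop)
    (p : Q → ℕ) (w : Q → Q → ℤ)
    (π : Q → Q) (q : Q)
    (hcyc : ∀ (k : ℕ) (c : ℕ → Q), 0 < k → c 0 = c k →
      (∀ j < k, GPi Q1 E π (c j) (c (j + 1))) →
      (∀ j ≤ k, Relation.ReflTransGen (GPi Q1 E π) q (c j)) →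
      (∑ j ∈ Finset.range k, w (c j) (c (j + 1)) < 0 ∨
        (∑ j ∈ Finset.range k, w (c j) (c (j + 1)) = 0 ∧
          ∃ j ∈ Finset.range (k + 1), Odd (p (c j)) ∧
            ∀ l ∈ Finset.range (k + 1), p (c j) ≤ p (c l)))) :
    ∀ (c₀ : ℕ) (σ : List Q → Q → Q), IsStrategy Q1 E σ →
      ∀ ρ, VsMemless Q1 E σ π q ρ →
        ¬(ParityCond p ρ ∧ EnergyCond w c₀ ρ) := by
  intro c₀ σ _ ρ hρ ⟨⟨q', hinf, heven, hmin⟩, henergy⟩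
  have hplay := hρ.isPlay_gPi
  obtain ⟨N, hN⟩ := exists_forall_ge_infOften ρ
  have hdrop : ∀ a, N ≤ a ∧ ρ a = q' → ∃ b, (N ≤ b ∧ ρ b = q') ∧ EL w ρ b < EL w ρ a := by
    rintro a ⟨ha, rfl⟩
    obtain ⟨b, hab, hb⟩ := hinf (a + 1)
    obtain ⟨k, rfl⟩ := Nat.exists_eq_add_of_lt hab
    refine ⟨a + (k + 1), ⟨by omega, hb⟩, EL_lt_of_isLosingCycle w p ?_ heven
      fun j _ => hmin _ (hN _ (by omega))⟩
    exact hcyc (k + 1) _ k.succ_pos (by simpa [← Nat.add_assoc] using hb.symm)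
      (fun j _ => hplay (a + j)) (fun j _ => hρ.1 ▸ hplay.reflTransGen (a + j))
  obtain ⟨a₀, ha₀, ha₀q⟩ := hinf N
  obtain ⟨a, ha⟩ := exists_lt_of_forall_exists_lt ⟨ha₀, ha₀q⟩ hdrop (-c₀)
  linarith [henergy a]

/-- if every cycle of `G_π` reachable from `q` has negative sum of weights,
or zero sum of weights and odd minimal priority, then player 1 does not win the energy
parity game from `q`: for every finite initial credit `c₀` and player-1 strategy `σ`,
the outcome of `σ` against `π` from `q` violates the parity or the energy condition. -/
theorem stmt11 {Q : Type*} [Fintype Q] (Q1 : Set Q) (E : Q → Q → Prop)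
    (hE : ∀ q, ∃ q', E q q') (p : Q → ℕ) (w : Q → Q → ℤ)
    (π : Q → Q) (hπ : ∀ s ∉ Q1, E s (π s)) (q : Q)
    (hcyc : ∀ (k : ℕ) (c : ℕ → Q), 0 < k → c 0 = c k →
      (∀ j < k, GPi Q1 E π (c j) (c (j + 1))) →
      (∀ j ≤ k, Relation.ReflTransGen (GPi Q1 E π) q (c j)) →
      (∑ j ∈ Finset.range k, w (c j) (c (j + 1)) < 0 ∨
        (∑ j ∈ Finset.range k, w (c j) (c (j + 1)) = 0 ∧
          ∃ j ∈ Finset.range (k + 1), Odd (p (c j)) ∧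
            ∀ l ∈ Finset.range (k + 1), p (c j) ≤ p (c l)))) :
    ∀ (c₀ : ℕ) (σ : List Q → Q → Q), IsStrategy Q1 E σ →
      ∀ ρ, VsMemless Q1 E σ π q ρ →
        ¬(ParityCond p ρ ∧ EnergyCond w c₀ ρ) :=
  stmt11_general Q1 E p w π q hcyc
end

section
/- Let G = ⟨Q,E⟩ be a finite directed graph with n = |Q| ≥ 2, an integer weight function w : E → ℤ, and a priority function p : Q → ℕ. Define Δ(q) = (−1)^{p(q)} · (1/n^{p(q)+1} − 1/n^{p(q)+2}) and the rational weight function w'(q,q') = w(q,q') + Δ(q). Then for every simple cycle γ in G (a cycle of length at most n in which no state is repeated except that the first and last states coincide): (i) if EL(w,γ) < 0 then EL(w',γ) < 0; (ii) if EL(w,γ) > 0 then EL(w',γ) > 0; (iii) if EL(w,γ) = 0 and the minimal priority of a state on γ is even then EL(w',γ) > 0; (iv) if EL(w,γ) = 0 and the minimal priority of a state on γ is odd then EL(w',γ) < 0. -/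
/-!
Write `x = 1/n`. Then `Δ q = (n - 1)/n² · (-x)^(p q)`, so the perturbation of a cycle's energy is
a positive multiple of `∑ (-x)^(p q)` over its at most `n` states. Every term has absolute value
at most `1`, so the perturbation is smaller than `(n - 1)/n < 1` and cannot change the sign of a
nonzero integer energy. On a cycle of zero energy the term `x^m` of a state of minimal priority `m`
dominates: each of the at most `n - 1` other terms either has the same sign or is at most
`x^(m+1)` in absolute value, and `(n - 1) · x^(m+1) < x^m`.
-/

open Finset

section NegPowSum

variable {ι α : Type*} [Field α] [LinearOrder α] [IsStrictOrderedRing α]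

theorem neg_one_pow_mul_one_div_pow_sub (a : α) (ha : a ≠ 0) (m : ℕ) :
    (-1) ^ m * (1 / a ^ (m + 1) - 1 / a ^ (m + 2)) = (a - 1) / a ^ 2 * (-a⁻¹) ^ m := by
  rw [neg_pow a⁻¹, inv_pow]
  field_simp
  ring

theorem abs_sum_neg_pow_le_card (s : Finset ι) (f : ι → ℕ) {x : α} (hx : |x| ≤ 1) :
    |∑ i ∈ s, (-x) ^ f i| ≤ #s := by
  calc |∑ i ∈ s, (-x) ^ f i| ≤ ∑ i ∈ s, |(-x) ^ f i| := abs_sum_le_sum_abs _ s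
    _ ≤ #s • (1 : α) := sum_le_card_nsmul s _ 1 fun i _ => by
        rw [abs_pow, abs_neg]
        exact pow_le_one₀ (abs_nonneg x) hx
    _ = #s := nsmul_one _

theorem sum_neg_pow_pos_of_even_min {s : Finset ι} {f : ι → ℕ} {x : α} (hx0 : 0 < x)
    (hx1 : x ≤ 1) (hs : ((#s : α) - 1) * x < 1) {i₀ : ι} (hi₀ : i₀ ∈ s)
    (hmin : ∀ i ∈ s, f i₀ ≤ f i) (heven : Even (f i₀)) :
    0 < ∑ i ∈ s, (-x) ^ f i := by
  classical
  set m := f i₀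
  have hrest : ∀ i ∈ s.erase i₀, -x ^ (m + 1) ≤ (-x) ^ f i := by
    intro i hi
    rcases (hmin i (mem_of_mem_erase hi)).eq_or_lt with h | h
    · rw [← h, heven.neg_pow]
      linarith [pow_pos hx0 m, pow_pos hx0 (m + 1)]
    · calc -x ^ (m + 1) ≤ -|(-x) ^ f i| := by
            rw [abs_pow, abs_neg, abs_of_pos hx0]
            exact neg_le_neg (pow_le_pow_of_le_one hx0.le hx1 h)
        _ ≤ (-x) ^ f i := neg_abs_le _
  have hcard : ((#s : α) - 1) * -x ^ (m + 1) ≤ ∑ i ∈ s.erase i₀, (-x) ^ f i := by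
    have := card_nsmul_le_sum _ _ _ hrest
    rwa [card_erase_of_mem hi₀, nsmul_eq_mul, Nat.cast_pred (card_pos.2 ⟨i₀, hi₀⟩)]
      at this
  have hlead : 0 < x ^ m * (1 - ((#s : α) - 1) * x) := mul_pos (pow_pos hx0 m) (by linarith)
  rw [← add_sum_erase s _ hi₀, heven.neg_pow]
  have hexpand : x ^ m * (1 - ((#s : α) - 1) * x) = x ^ m + ((#s : α) - 1) * -x ^ (m + 1) := by
    ring
  linarith

theorem sum_neg_pow_neg_of_odd_min {s : Finset ι} {f : ι → ℕ} {x : α} (hx0 : 0 < x)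
    (hx1 : x ≤ 1) (hs : ((#s : α) - 1) * x < 1) {i₀ : ι} (hi₀ : i₀ ∈ s)
    (hmin : ∀ i ∈ s, f i₀ ≤ f i) (hodd : Odd (f i₀)) :
    ∑ i ∈ s, (-x) ^ f i < 0 := by
  -- Raising every priority by one makes the minimum even and multiplies the sum by `-x`.
  have hshift := sum_neg_pow_pos_of_even_min (f := fun i => f i + 1) hx0 hx1 hs hi₀
    (fun i hi => Nat.succ_le_succ (hmin i hi)) hodd.add_one
  simp only [pow_succ, ← sum_mul] at hshift
  exact neg_of_mul_pos_left hshift (by linarith)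

theorem abs_sub_one_div_sq_mul_lt_one {a t : α} (ha : 1 ≤ a) (ht : |t| ≤ a) :
    |(a - 1) / a ^ 2 * t| < 1 := by
  have hscale : 0 ≤ (a - 1) / a ^ 2 := div_nonneg (by linarith) (by positivity)
  calc |(a - 1) / a ^ 2 * t| ≤ (a - 1) / a ^ 2 * a := by
        rw [abs_mul, abs_of_nonneg hscale]
        exact mul_le_mul_of_nonneg_left ht hscale
    _ < 1 := by
        rw [div_mul_eq_mul_div, div_lt_one (by positivity)]
        nlinarith

end NegPowSum

theorem exists_min_mem_range_of_closed {f : ℕ → ℕ} {k j : ℕ} (hk : 0 < k) (hf : f 0 = f k)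
    (hj : j ∈ range (k + 1)) (hmin : ∀ l ∈ range (k + 1), f j ≤ f l) :
    ∃ j₀ ∈ range k, f j₀ = f j ∧ ∀ l ∈ range k, f j₀ ≤ f l := by
  obtain ⟨j₀, hj₀, hfj⟩ : ∃ j₀ ∈ range k, f j₀ = f j := by
    rcases (Nat.lt_succ_iff.mp (mem_range.mp hj)).lt_or_eq with h | rfl
    · exact ⟨j, mem_range.mpr h, rfl⟩
    · exact ⟨0, mem_range.mpr hk, hf⟩
  refine ⟨j₀, hj₀, hfj, fun l hl => hfj ▸ hmin l ?_⟩
  exact range_subset_range.mpr k.le_succ hl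

theorem stmt12_general {Q : Type*}
    (w : Q → Q → ℤ) (p : Q → ℕ) (n : ℕ) (h2 : 2 ≤ n)
    (Δ : Q → ℚ)
    (hΔ : ∀ q, Δ q = (-1 : ℚ) ^ (p q) *
      (1 / (n : ℚ) ^ (p q + 1) - 1 / (n : ℚ) ^ (p q + 2)))
    (w' : Q → Q → ℚ) (hw' : ∀ q q', w' q q' = (w q q' : ℚ) + Δ q)
    (k : ℕ) (c : ℕ → Q) (hk : 0 < k) (hkn : k ≤ n) (hcyc : c 0 = c k) :
    ((∑ j ∈ Finset.range k, w (c j) (c (j + 1)) < 0 →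
        ∑ j ∈ Finset.range k, w' (c j) (c (j + 1)) < 0) ∧
      (0 < ∑ j ∈ Finset.range k, w (c j) (c (j + 1)) →
        0 < ∑ j ∈ Finset.range k, w' (c j) (c (j + 1))) ∧
      (∑ j ∈ Finset.range k, w (c j) (c (j + 1)) = 0 →
        (∃ j ∈ Finset.range (k + 1), Even (p (c j)) ∧
          ∀ l ∈ Finset.range (k + 1), p (c j) ≤ p (c l)) →
        0 < ∑ j ∈ Finset.range k, w' (c j) (c (j + 1))) ∧
      (∑ j ∈ Finset.range k, w (c j) (c (j + 1)) = 0 →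
        (∃ j ∈ Finset.range (k + 1), Odd (p (c j)) ∧
          ∀ l ∈ Finset.range (k + 1), p (c j) ≤ p (c l)) →
        ∑ j ∈ Finset.range k, w' (c j) (c (j + 1)) < 0)) := by
  have hn : (2 : ℚ) ≤ n := by exact_mod_cast h2
  set S := ∑ j ∈ range k, w (c j) (c (j + 1))
  set x : ℚ := (n : ℚ)⁻¹
  set T := ∑ j ∈ range k, (-x) ^ p (c j)
  have hx0 : 0 < x := inv_pos.mpr (by linarith)
  have hx1 : x ≤ 1 := inv_le_one_of_one_le₀ (by linarith)
  have hkx : ((#(range k) : ℚ) - 1) * x < 1 := by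
    rw [card_range, ← div_eq_mul_inv, div_lt_one (by linarith)]
    linarith [(Nat.cast_le (α := ℚ)).mpr hkn]
  have hscale : 0 < ((n : ℚ) - 1) / n ^ 2 := div_pos (by linarith) (by positivity)
  have hEL : ∑ j ∈ range k, w' (c j) (c (j + 1)) = (S : ℚ) + ((n : ℚ) - 1) / n ^ 2 * T := by
    have hn0 : (n : ℚ) ≠ 0 := by positivity
    simp only [hw', hΔ, neg_one_pow_mul_one_div_pow_sub (n : ℚ) hn0,
      sum_add_distrib, mul_sum, Int.cast_sum, x, S, T]
  have hT : |T| ≤ n := by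
    have := abs_sum_neg_pow_le_card (range k) (fun j => p (c j)) (abs_le.mpr ⟨by linarith, hx1⟩)
    rw [card_range] at this
    exact this.trans (by exact_mod_cast hkn)
  obtain ⟨hlo, hhi⟩ := abs_lt.mp (abs_sub_one_div_sq_mul_lt_one (by linarith) hT)
  refine ⟨fun hneg => ?_, fun hpos => ?_, fun hzero ⟨j, hj, heven, hmin⟩ => ?_,
    fun hzero ⟨j, hj, hodd, hmin⟩ => ?_⟩ <;> rw [hEL]
  · have : (S : ℚ) + 1 ≤ 0 := by
      exact_mod_cast Int.lt_iff_add_one_le.mp hneg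
    linarith
  · have : (0 : ℚ) + 1 ≤ (S : ℚ) := by
      exact_mod_cast Int.lt_iff_add_one_le.mp hpos
    linarith
  · obtain ⟨j₀, hj₀, hpj, hmin₀⟩ :=
      exists_min_mem_range_of_closed (f := fun j => p (c j)) hk (congrArg p hcyc) hj hmin
    rw [hzero, Int.cast_zero, zero_add]
    exact mul_pos hscale (sum_neg_pow_pos_of_even_min hx0 hx1 hkx hj₀ hmin₀ (hpj ▸ heven))
  · obtain ⟨j₀, hj₀, hpj, hmin₀⟩ :=
      exists_min_mem_range_of_closed (f := fun j => p (c j)) hk (congrArg p hcyc) hj hmin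
    rw [hzero, Int.cast_zero, zero_add]
    exact mul_neg_of_pos_of_neg hscale
      (sum_neg_pow_neg_of_odd_min hx0 hx1 hkx hj₀ hmin₀ (hpj ▸ hodd))

/-- with `Δ(q) = (−1)^{p q} · (1/n^{p q + 1} − 1/n^{p q + 2})` and
`w' = w + Δ`, every simple cycle `γ` of `G` satisfies:
(i) `EL(w,γ) < 0 → EL(w',γ) < 0`; (ii) `EL(w,γ) > 0 → EL(w',γ) > 0`;
(iii) if `EL(w,γ) = 0` and the minimal priority on `γ` is even then `EL(w',γ) > 0`;
(iv) if `EL(w,γ) = 0` and the minimal priority on `γ` is odd then `EL(w',γ) < 0`. -/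
theorem stmt12 {Q : Type*} [Fintype Q] (E : Q → Q → Prop)
    (w : Q → Q → ℤ) (p : Q → ℕ) (n : ℕ) (hn : Fintype.card Q = n) (h2 : 2 ≤ n)
    (Δ : Q → ℚ)
    (hΔ : ∀ q, Δ q = (-1 : ℚ) ^ (p q) *
      (1 / (n : ℚ) ^ (p q + 1) - 1 / (n : ℚ) ^ (p q + 2)))
    (w' : Q → Q → ℚ) (hw' : ∀ q q', w' q q' = (w q q' : ℚ) + Δ q)
    (k : ℕ) (c : ℕ → Q) (hk : 0 < k) (hkn : k ≤ n) (hcyc : c 0 = c k)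
    (hedge : ∀ j < k, E (c j) (c (j + 1)))
    (hsimple : ∀ i j, i < k → j < k → c i = c j → i = j) :
    ((∑ j ∈ Finset.range k, w (c j) (c (j + 1)) < 0 →
        ∑ j ∈ Finset.range k, w' (c j) (c (j + 1)) < 0) ∧
      (0 < ∑ j ∈ Finset.range k, w (c j) (c (j + 1)) →
        0 < ∑ j ∈ Finset.range k, w' (c j) (c (j + 1))) ∧
      (∑ j ∈ Finset.range k, w (c j) (c (j + 1)) = 0 →
        (∃ j ∈ Finset.range (k + 1), Even (p (c j)) ∧
          ∀ l ∈ Finset.range (k + 1), p (c j) ≤ p (c l)) →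
        0 < ∑ j ∈ Finset.range k, w' (c j) (c (j + 1))) ∧
      (∑ j ∈ Finset.range k, w (c j) (c (j + 1)) = 0 →
        (∃ j ∈ Finset.range (k + 1), Odd (p (c j)) ∧
          ∀ l ∈ Finset.range (k + 1), p (c j) ≤ p (c l)) →
        ∑ j ∈ Finset.range k, w' (c j) (c (j + 1)) < 0)) :=
  stmt12_general w p n h2 Δ hΔ w' hw' k c hk hkn hcyc
end
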